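/- arXiv:2110.02363 — 5 statements merged into one kernel-verified Lean document; each statement's English description precedes it below -/
import Mathlib

section
/- Let R be a commutative ring, let n, k be natural numbers with k ≥ 1, and let y : Fin n → R be a family of idempotent elements (y i * y i = y i for all i). Then (∑_{i} y i)^k = ∑_{m=1}^{k} S(k,m) • (∑_{A ⊆ Fin n, |A| = m} ∏_{i ∈ A} y i), where the inner sum ranges over all m-element subsets A of Fin n. -/
open Finset

/-- `S k m` is the number of surjections from a `k`-element set onto an `m`-element set. -/
noncomputable def surjCount (k m : ℕ) : ℕ :=
  Nat.card {f : Fin k → Fin m // Function.Surjective f}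

lemma surjCount_eq_zero_of_lt {k m : ℕ} (h : k < m) : surjCount k m = 0 := by
  rw [surjCount, Nat.card_eq_zero]
  left
  constructor
  rintro ⟨f, hf⟩
  have := Fintype.card_le_of_surjective f hf
  simp at this
  omega

lemma surjCount_zero {k : ℕ} (hk : 1 ≤ k) : surjCount k 0 = 0 := by
  rw [surjCount, Nat.card_eq_zero]
  left
  constructor
  rintro ⟨f, -⟩
  exact (f ⟨0, hk⟩).elim0

/-- The fibers of `f ↦ Finset.image f univ` have cardinality `surjCount k A.card`. -/
lemma fiber_card (n k : ℕ) (A : Finset (Fin n)) :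
    Nat.card {f : Fin k → Fin n // Finset.image f univ = A} = surjCount k A.card := by
  rw [surjCount]
  apply Nat.card_congr
  have e := A.equivFin
  have hmem : ∀ (f : {f : Fin k → Fin n // Finset.image f univ = A}) (j : Fin k),
      f.1 j ∈ A := by
    intro f j
    have h : f.1 j ∈ Finset.image f.1 univ := mem_image_of_mem _ (mem_univ j)
    rwa [f.2] at h
  refine ⟨fun f => ⟨fun j => e ⟨f.1 j, hmem f j⟩, ?_⟩,
    fun g => ⟨fun j => (e.symm (g.1 j) : Fin n), ?_⟩, ?_, ?_⟩
  · intro b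
    have hb : (e.symm b : Fin n) ∈ Finset.image f.1 univ := by
      rw [f.2]; exact (e.symm b).2
    rw [mem_image] at hb
    obtain ⟨j, -, hj⟩ := hb
    refine ⟨j, ?_⟩
    have h2 : (⟨f.1 j, hmem f j⟩ : A) = e.symm b := Subtype.ext hj
    show e ⟨f.1 j, hmem f j⟩ = b
    rw [h2, Equiv.apply_symm_apply]
  · apply subset_antisymm
    · intro a ha
      rw [mem_image] at ha
      obtain ⟨j, -, hj⟩ := ha
      rw [← hj]
      exact (e.symm (g.1 j)).2
    · intro a ha
      obtain ⟨j, hj⟩ := g.2 (e ⟨a, ha⟩)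
      rw [mem_image]
      exact ⟨j, mem_univ j, by rw [hj, Equiv.symm_apply_apply]⟩
  · intro f
    ext j
    simp
  · intro g
    ext j
    simp

theorem bernoulli_sum_power {R : Type*} [CommRing R] (n k : ℕ) (hk : 1 ≤ k)
    (y : Fin n → R) (hy : ∀ i, y i * y i = y i) :
    (∑ i, y i) ^ k =
      ∑ m ∈ Finset.Icc 1 k,
        surjCount k m •
          ∑ A ∈ Finset.univ.powersetCard m, ∏ i ∈ A, y i := by
  classical
  have hfiber : ∀ A : Finset (Fin n),
      #{f : Fin k → Fin n | Finset.image f univ = A} = surjCount k A.card := by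
    intro A
    rw [← fiber_card n k A, Nat.card_eq_fintype_card, Fintype.card_subtype]
  -- common target: sum over all subsets A
  have key : (∑ i, y i) ^ k
      = ∑ A : Finset (Fin n), surjCount k A.card • ∏ i ∈ A, y i := by
    rw [Fintype.sum_pow]
    have step1 : ∀ f : Fin k → Fin n, (∏ j, y (f j)) = ∏ i ∈ Finset.image f univ, y i := by
      intro f
      rw [Finset.prod_comp]
      apply Finset.prod_congr rfl
      intro i hi
      have hpos : 0 < #{a : Fin k | f a = i} := by
        rw [Finset.card_pos]
        rw [mem_image] at hi
        obtain ⟨j, -, hj⟩ := hi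
        exact ⟨j, by simp [hj]⟩
      rw [show #{a : Fin k | f a = i} = (#{a : Fin k | f a = i} - 1) + 1 by omega]
      exact IsIdempotentElem.pow_succ_eq _ (hy i)
    rw [Finset.sum_congr rfl fun f _ => step1 f]
    rw [Finset.sum_comp (fun A => ∏ i ∈ A, y i) (fun f => Finset.image f univ)]
    rw [← Finset.sum_subset (Finset.subset_univ _)]
    · exact Finset.sum_congr rfl fun A _ => by rw [hfiber A]
    · intro A _ hA
      have h0 : #{f : Fin k → Fin n | Finset.image f univ = A} = 0 := by
        rw [Finset.card_eq_zero]
        ext f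
        simp only [Finset.mem_filter, Finset.mem_univ, true_and, Finset.notMem_empty,
          iff_false]
        intro h
        exact hA (by rw [mem_image]; exact ⟨f, mem_univ f, h⟩)
      rw [hfiber A] at h0
      rw [h0, zero_smul]
  rw [key]
  have h1 : ∑ A : Finset (Fin n), surjCount k A.card • ∏ i ∈ A, y i
      = ∑ A ∈ Finset.univ.filter (fun A => A.card ∈ Finset.Icc 1 k),
          surjCount k A.card • ∏ i ∈ A, y i := by
    symm
    apply Finset.sum_subset (Finset.filter_subset _ _)
    intro A _ hA
    simp only [Finset.mem_filter, Finset.mem_univ, true_and, Finset.mem_Icc, not_and,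
      not_le] at hA
    rcases Nat.eq_zero_or_pos A.card with h0 | hpos
    · rw [h0, surjCount_zero hk, zero_smul]
    · rw [surjCount_eq_zero_of_lt (hA hpos), zero_smul]
  rw [h1, ← Finset.sum_fiberwise_eq_sum_filter Finset.univ (Finset.Icc 1 k)
    (fun A => A.card) (fun A => surjCount k A.card • ∏ i ∈ A, y i)]
  apply Finset.sum_congr rfl
  intro m hm
  rw [Finset.smul_sum]
  apply Finset.sum_congr
  · ext A
    simp [Finset.mem_powersetCard_univ]
  · intro A hA
    rw [Finset.mem_powersetCard_univ.mp hA]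
end

section
/- Let (Ω, μ) be a probability space and let (Y i)_{i ∈ ℕ} be an independent family of measurable random variables Ω → ℝ, each taking only the values 0 and 1, with p i = μ{ω : Y i ω = 1} and ∑'_{i} p i < ∞. Define X ω = ∑'_{i} Y i ω. Then for every natural number k ≥ 1, the random variable X^k is integrable, i.e. E[X^k] < ∞. -/
open Finset MeasureTheory ProbabilityTheory

theorem bernoulli_infinite_sum_bounded_moments {Ω : Type*} [MeasurableSpace Ω]
    (μ : Measure Ω) [IsProbabilityMeasure μ] (Y : ℕ → Ω → ℝ)
    (hmeas : ∀ i, Measurable (Y i)) (h01 : ∀ i ω, Y i ω = 0 ∨ Y i ω = 1)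
    (hindep : iIndepFun Y μ)
    (hsum : ∑' i : ℕ, μ {ω | Y i ω = 1} < ⊤) :
    ∀ k : ℕ, 1 ≤ k → Integrable (fun ω => (∑' i : ℕ, Y i ω) ^ k) μ := by
  intro k hk
  classical
  have hY0 : ∀ i ω, 0 ≤ Y i ω := by
    intro i ω
    rcases h01 i ω with h | h <;> rw [h] <;> norm_num
  set W : ℕ → Ω → ENNReal := fun i ω => ENNReal.ofReal (Y i ω) with hW
  have hWmeas : ∀ i, Measurable (W i) := fun i => (hmeas i).ennreal_ofReal
  set g : Ω → ENNReal := fun ω => ∑' i, W i ω with hg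
  have hgmeas : Measurable g := Measurable.ennreal_tsum hWmeas
  set Z : ℕ → Ω → ENNReal := fun i ω => ENNReal.ofReal (Real.exp (Y i ω)) with hZ
  have hZmeas : ∀ i, Measurable (Z i) :=
    fun i => (Real.measurable_exp.comp (hmeas i)).ennreal_ofReal
  have hZindep : iIndepFun Z μ :=
    hindep.comp (fun _ (x : ℝ) => ENNReal.ofReal (Real.exp x))
      (fun _ => Real.measurable_exp.ennreal_ofReal)
  set p : ℕ → ENNReal := fun i => μ {ω | Y i ω = 1} with hp
  have hA : ∀ i, MeasurableSet {ω | Y i ω = 1} := by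
    intro i
    have : {ω | Y i ω = 1} = Y i ⁻¹' {1} := rfl
    rw [this]
    exact hmeas i (measurableSet_singleton 1)
  -- single factor bound
  have hZint : ∀ i, ∫⁻ ω, Z i ω ∂μ ≤ ENNReal.ofReal (Real.exp (2 * (p i).toReal)) := by
    intro i
    have hle : ∀ ω, Z i ω ≤ 1 + ({ω | Y i ω = 1}).indicator (fun _ => (2 : ENNReal)) ω := by
      intro ω
      rcases h01 i ω with h | h
      · simp only [hZ, h, Real.exp_zero, ENNReal.ofReal_one]
        exact le_self_add
      · have hmem : ω ∈ {ω | Y i ω = 1} := h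
        rw [Set.indicator_of_mem hmem]
        simp only [hZ, h]
        calc ENNReal.ofReal (Real.exp 1) ≤ ENNReal.ofReal 3 := by
              refine ENNReal.ofReal_le_ofReal ?_
              exact Real.exp_one_lt_d9.le.trans (by norm_num)
          _ ≤ 1 + 2 := by
              rw [show ((3:ℝ)) = ((3:ℕ):ℝ) by norm_num, ENNReal.ofReal_natCast]
              norm_num
    calc ∫⁻ ω, Z i ω ∂μ
        ≤ ∫⁻ ω, (1 + ({ω | Y i ω = 1}).indicator (fun _ => (2 : ENNReal)) ω) ∂μ :=
          lintegral_mono hle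
      _ = 1 + 2 * p i := by
          rw [lintegral_add_left measurable_const, lintegral_const,
            lintegral_indicator (hA i)]
          simp [hp, mul_comm]
      _ ≤ ENNReal.ofReal (Real.exp (2 * (p i).toReal)) := by
          have h1 : (1 : ENNReal) + 2 * p i = ENNReal.ofReal (1 + 2 * (p i).toReal) := by
            rw [ENNReal.ofReal_add (by norm_num) (by positivity), ENNReal.ofReal_one,
              ENNReal.ofReal_mul (by norm_num), ENNReal.ofReal_ofNat,
              ENNReal.ofReal_toReal (measure_ne_top μ _)]
          rw [h1]
          refine ENNReal.ofReal_le_ofReal ?_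
          have := Real.add_one_le_exp (2 * (p i).toReal)
          linarith
  -- product of integrals
  have hprod : ∀ n, ∫⁻ ω, ∏ i ∈ range n, Z i ω ∂μ = ∏ i ∈ range n, ∫⁻ ω, Z i ω ∂μ := by
    intro n
    induction n with
    | zero => simp
    | succ n ih =>
      have hm : Measurable (∏ i ∈ range n, Z i) := by
        rw [Finset.prod_fn]
        exact Finset.measurable_prod _ fun i _ => hZmeas i
      have hind : IndepFun (∏ i ∈ range n, Z i) (Z n) μ :=
        hZindep.indepFun_prod_range_succ hZmeas n
      calc ∫⁻ ω, ∏ i ∈ range (n + 1), Z i ω ∂μ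
          = ∫⁻ ω, (∏ i ∈ range n, Z i) ω * Z n ω ∂μ := by
            refine lintegral_congr fun ω => ?_
            rw [prod_range_succ, Finset.prod_apply]
        _ = (∫⁻ ω, (∏ i ∈ range n, Z i) ω ∂μ) * ∫⁻ ω, Z n ω ∂μ :=
            lintegral_mul_eq_lintegral_mul_lintegral_of_indepFun''
              hm.aemeasurable (hZmeas n).aemeasurable hind
        _ = ∏ i ∈ range (n + 1), ∫⁻ ω, Z i ω ∂μ := by
            rw [prod_range_succ, ← ih]
            congr 1
            exact lintegral_congr fun ω => by rw [Finset.prod_apply]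
  -- uniform bound on products
  set T : ℝ := (∑' i, p i).toReal with hT
  have hC : ∀ n, ∏ i ∈ range n, ∫⁻ ω, Z i ω ∂μ ≤ ENNReal.ofReal (Real.exp (2 * T)) := by
    intro n
    have hpartial : ∑ i ∈ range n, (p i).toReal ≤ T := by
      rw [← ENNReal.toReal_sum (fun i _ => measure_ne_top μ _)]
      exact ENNReal.toReal_mono hsum.ne (ENNReal.sum_le_tsum _)
    calc ∏ i ∈ range n, ∫⁻ ω, Z i ω ∂μ
        ≤ ∏ i ∈ range n, ENNReal.ofReal (Real.exp (2 * (p i).toReal)) :=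
          Finset.prod_le_prod' fun i _ => hZint i
      _ = ENNReal.ofReal (∏ i ∈ range n, Real.exp (2 * (p i).toReal)) :=
          (ENNReal.ofReal_prod_of_nonneg fun i _ => (Real.exp_pos _).le).symm
      _ = ENNReal.ofReal (Real.exp (∑ i ∈ range n, 2 * (p i).toReal)) := by
          rw [Real.exp_sum]
      _ ≤ ENNReal.ofReal (Real.exp (2 * T)) := by
          refine ENNReal.ofReal_le_ofReal (Real.exp_le_exp.2 ?_)
          rw [← Finset.mul_sum]
          linarith
  -- pointwise bound of powers of partial sums
  have hpt : ∀ n ω, (∑ i ∈ range n, W i ω) ^ k ≤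
      (k.factorial : ENNReal) * ∏ i ∈ range n, Z i ω := by
    intro n ω
    set s : ℝ := ∑ i ∈ range n, Y i ω with hs
    have hs0 : 0 ≤ s := Finset.sum_nonneg fun i _ => hY0 i ω
    have h1 : ∑ i ∈ range n, W i ω = ENNReal.ofReal s :=
      (ENNReal.ofReal_sum_of_nonneg fun i _ => hY0 i ω).symm
    have h2 : s ^ k ≤ (k.factorial : ℝ) * Real.exp s := by
      have h3 := Real.pow_div_factorial_le_exp s hs0 k
      have h4 : (0:ℝ) < (k.factorial : ℝ) := by positivity
      rw [div_le_iff₀ h4] at h3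
      linarith [h3]
    calc (∑ i ∈ range n, W i ω) ^ k
        = ENNReal.ofReal (s ^ k) := by rw [h1, ENNReal.ofReal_pow hs0]
      _ ≤ ENNReal.ofReal ((k.factorial : ℝ) * Real.exp s) := ENNReal.ofReal_le_ofReal h2
      _ = (k.factorial : ENNReal) * ENNReal.ofReal (Real.exp s) := by
          rw [ENNReal.ofReal_mul (by positivity), ENNReal.ofReal_natCast]
      _ = (k.factorial : ENNReal) * ∏ i ∈ range n, Z i ω := by
          rw [hs, Real.exp_sum, ENNReal.ofReal_prod_of_nonneg fun i _ => (Real.exp_pos _).le]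
  -- monotone convergence
  have hGmeas : ∀ n, Measurable fun ω => (∑ i ∈ range n, W i ω) ^ k :=
    fun n => (Finset.measurable_sum _ fun i _ => hWmeas i).pow_const k
  have hGmono : Monotone fun n => fun ω => (∑ i ∈ range n, W i ω) ^ k := by
    intro a b hab ω
    exact pow_le_pow_left₀ zero_le (Finset.sum_le_sum_of_subset (range_subset_range.2 hab)) k
  have hGsup : ∀ ω, g ω ^ k = ⨆ n, (∑ i ∈ range n, W i ω) ^ k := by
    intro ω
    have h1 : g ω = ⨆ n, ∑ i ∈ range n, W i ω := ENNReal.tsum_eq_iSup_nat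
    rw [h1]
    exact Monotone.map_iSup_of_continuousAt (f := fun x : ENNReal => x ^ k)
      ((ENNReal.continuous_pow k).continuousAt)
      (fun a b hab => pow_le_pow_left₀ zero_le hab k)
      (by simp only [bot_eq_zero]; exact zero_pow (by omega))
  have hfin : ∫⁻ ω, g ω ^ k ∂μ < ⊤ := by
    have key : ∫⁻ ω, g ω ^ k ∂μ =
        ⨆ n, ∫⁻ ω, (∑ i ∈ range n, W i ω) ^ k ∂μ := by
      rw [← lintegral_iSup hGmeas hGmono]
      exact lintegral_congr fun ω => hGsup ω
    rw [key]
    refine lt_of_le_of_lt (iSup_le fun n => ?_)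
      (show (k.factorial : ENNReal) * ENNReal.ofReal (Real.exp (2 * T)) < ⊤ from
        ENNReal.mul_lt_top (by simp) ENNReal.ofReal_lt_top)
    calc ∫⁻ ω, (∑ i ∈ range n, W i ω) ^ k ∂μ
        ≤ ∫⁻ ω, (k.factorial : ENNReal) * ∏ i ∈ range n, Z i ω ∂μ :=
          lintegral_mono fun ω => hpt n ω
      _ = (k.factorial : ENNReal) * ∫⁻ ω, ∏ i ∈ range n, Z i ω ∂μ := by
          have hm : Measurable fun ω => ∏ i ∈ range n, Z i ω :=
            Finset.measurable_prod _ fun i _ => hZmeas i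
          rw [lintegral_const_mul _ hm]
      _ = (k.factorial : ENNReal) * ∏ i ∈ range n, ∫⁻ ω, Z i ω ∂μ := by rw [hprod n]
      _ ≤ (k.factorial : ENNReal) * ENNReal.ofReal (Real.exp (2 * T)) :=
          mul_le_mul_right (hC n) _
  -- identify the tsum with the ENNReal sum
  have hXg : ∀ ω, (∑' i, Y i ω) = (g ω).toReal := by
    intro ω
    rw [hg, ENNReal.tsum_toReal_eq fun i => ENNReal.ofReal_ne_top]
    exact tsum_congr fun i => (ENNReal.toReal_ofReal (hY0 i ω)).symm
  have hfeq : (fun ω => (∑' i, Y i ω) ^ k) = fun ω => ((g ω).toReal) ^ k :=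
    funext fun ω => by rw [hXg ω]
  have hXmeas : Measurable fun ω => (∑' i, Y i ω) ^ k := by
    rw [hfeq]
    exact hgmeas.ennreal_toReal.pow_const k
  refine ⟨hXmeas.aestronglyMeasurable, ?_⟩
  rw [hasFiniteIntegral_def]
  refine lt_of_le_of_lt (lintegral_mono fun ω => ?_) hfin
  have h0 : 0 ≤ (∑' i, Y i ω) := tsum_nonneg fun i => hY0 i ω
  rw [Real.enorm_eq_ofReal (pow_nonneg h0 k), hXg ω,
    ENNReal.ofReal_pow ENNReal.toReal_nonneg]
  exact pow_le_pow_left₀ zero_le ENNReal.ofReal_toReal_le k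
end

section
/- Let μ be a probability measure on ℕ and let k ≥ 1 be a natural number such that the function n ↦ [n]_k = n(n-1)⋯(n-k+1) is integrable with respect to μ. Then the k-th factorial moment satisfies ∫ [n]_k dμ(n) = k! · ∑'_{M ≥ 1} C(M-1, k-1) · μ({n : n ≥ M}). -/
open Finset MeasureTheory
open scoped ENNReal

lemma hockey (k n : ℕ) (hk : 1 ≤ k) :
    ∑ j ∈ range n, Nat.choose j (k - 1) = Nat.choose n k := by
  obtain ⟨k, rfl⟩ := Nat.exists_eq_add_of_le hk
  induction n with
  | zero => simp [Nat.choose_eq_zero_of_lt]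
  | succ n ih =>
    rw [Finset.sum_range_succ, ih, Nat.add_sub_cancel_left] at *
    simp [Nat.choose_succ_succ, Nat.add_comm]

theorem count_factorial_moment_upper_tail (μ : Measure ℕ) [IsProbabilityMeasure μ]
    (k : ℕ) (hk : 1 ≤ k)
    (hint : Integrable (fun n : ℕ => (n.descFactorial k : ℝ)) μ) :
    (∫ n, (n.descFactorial k : ℝ) ∂μ) =
      (Nat.factorial k : ℝ) *
        ∑' M : {M : ℕ // 1 ≤ M},
          (Nat.choose ((M : ℕ) - 1) (k - 1) : ℝ) * (μ {n | (M : ℕ) ≤ n}).toReal := by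
  -- reindex RHS tsum over ℕ
  rw [← Equiv.tsum_eq (⟨fun j => ⟨j + 1, Nat.succ_le_succ (Nat.zero_le _)⟩,
     fun M => (M : ℕ) - 1,
     fun j => by simp,
     fun M => by ext; simp [Nat.sub_add_cancel M.2]⟩ : ℕ ≃ {M : ℕ // 1 ≤ M})]
  simp only [Equiv.coe_fn_mk, Nat.add_sub_cancel]
  -- pointwise identity in ℝ≥0∞
  have key : ∀ n : ℕ, (n.descFactorial k : ℝ≥0∞) =
      (Nat.factorial k : ℝ≥0∞) *
        ∑' j : ℕ, (Nat.choose j (k - 1) : ℝ≥0∞) * Set.indicator {m : ℕ | j + 1 ≤ m} 1 n := by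
    intro n
    have hsum : ∑' j : ℕ, (Nat.choose j (k - 1) : ℝ≥0∞) * Set.indicator {m : ℕ | j + 1 ≤ m} 1 n
        = ∑ j ∈ range n, (Nat.choose j (k - 1) : ℝ≥0∞) := by
      rw [tsum_eq_sum (s := range n)]
      · refine Finset.sum_congr rfl fun j hj => ?_
        rw [Set.indicator_of_mem (by simpa using Finset.mem_range.mp hj), Pi.one_apply, mul_one]
      · intro j hj
        rw [Set.indicator_of_notMem (by simp only [Finset.mem_range, not_lt] at hj; simp only [Set.mem_setOf_eq, not_le]; omega), mul_zero]
    rw [hsum, ← Nat.cast_sum, hockey k n hk, Nat.descFactorial_eq_factorial_mul_choose,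
      Nat.cast_mul]
  have hlint : ∫⁻ n, (n.descFactorial k : ℝ≥0∞) ∂μ =
      (Nat.factorial k : ℝ≥0∞) * ∑' j : ℕ, (Nat.choose j (k - 1) : ℝ≥0∞) * μ {n : ℕ | j + 1 ≤ n} := by
    simp_rw [key]
    rw [lintegral_const_mul _ (by exact measurable_of_countable _)]
    congr 1
    rw [lintegral_tsum (fun j => (measurable_of_countable _).aemeasurable)]
    refine tsum_congr fun j => ?_
    rw [lintegral_const_mul _ (measurable_of_countable _), lintegral_indicator_one]
    exact MeasurableSet.of_discrete
  have hInt : ∫ n, (n.descFactorial k : ℝ) ∂μ = (∫⁻ n, (n.descFactorial k : ℝ≥0∞) ∂μ).toReal := by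
    rw [integral_eq_lintegral_of_nonneg_ae (Filter.Eventually.of_forall fun n => by positivity)
      hint.aestronglyMeasurable]
    congr 1
    exact lintegral_congr fun n => by rw [ENNReal.ofReal_natCast]
  rw [hInt, hlint, ENNReal.toReal_mul, ENNReal.tsum_toReal_eq
    (fun j => ENNReal.mul_ne_top (by simp) (measure_ne_top _ _))]
  simp [ENNReal.toReal_mul]
end

section
/- Fix an integer r ≥ 2 and let f : ℕ → ℝ be the ideal soliton probability mass function: f(1) = 1/r, f(i) = 1/(i(i-1)) for 2 ≤ i ≤ r, and f(i) = 0 otherwise. Then for every natural number k ≥ 2, the k-th factorial moment satisfies ∑_{ℓ=1}^{r} [ℓ]_k · f(ℓ) = k! · ( ((r-1)/r) · C(r,k) − C(r-1,k) − ((k-2)/(k-1)) · C(r-1,k-1) ). -/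
open Finset

private lemma hockey_s12 (n j : ℕ) : ∑ m ∈ Finset.range n, m.choose j = n.choose (j+1) := by
  induction n with
  | zero => simp
  | succ n ih => rw [Finset.sum_range_succ, ih, Nat.choose_succ_succ', Nat.add_comm]

theorem soliton_factorial_moment (r : ℕ) (hr : 2 ≤ r) (f : ℕ → ℝ)
    (hf1 : f 1 = 1 / r)
    (hf2 : ∀ i, 2 ≤ i → i ≤ r → f i = 1 / ((i : ℝ) * ((i : ℝ) - 1)))
    (hf0 : ∀ i, i = 0 ∨ r < i → f i = 0)
    (k : ℕ) (hk : 2 ≤ k) :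
    ∑ l ∈ Finset.Icc 1 r, (l.descFactorial k : ℝ) * f l =
      (Nat.factorial k : ℝ) *
        (((r : ℝ) - 1) / r * (Nat.choose r k : ℝ) - (Nat.choose (r - 1) k : ℝ) -
          ((k : ℝ) - 2) / ((k : ℝ) - 1) * (Nat.choose (r - 1) (k - 1) : ℝ)) := by
  obtain ⟨j, rfl⟩ : ∃ j, k = j + 2 := ⟨k - 2, by omega⟩
  obtain ⟨s, rfl⟩ : ∃ s, r = s + 2 := ⟨r - 2, by omega⟩
  have hL : ∑ l ∈ Finset.Icc 1 (s+2), (l.descFactorial (j+2) : ℝ) * f l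
      = ((Nat.factorial j * Nat.choose (s+1) (j+1) : ℕ) : ℝ) := by
    rw [← Finset.Ico_add_one_right_eq_Icc, Finset.sum_Ico_eq_sum_range]
    have hrange : s + 2 + 1 - 1 = s + 2 := by omega
    rw [hrange, Finset.sum_range_succ']
    have h0 : ((1+0 : ℕ).descFactorial (j+2) : ℝ) * f (1+0) = 0 := by
      have : (1:ℕ).descFactorial (j+2) = 0 := Nat.descFactorial_eq_zero_iff_lt.mpr (by omega)
      simp [this]
    rw [h0, add_zero]
    have hterm : ∀ m ∈ Finset.range (s+1),
        ((1 + (m+1) : ℕ).descFactorial (j+2) : ℝ) * f (1+(m+1)) = (m.descFactorial j : ℝ) := by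
      intro m hm
      have h1 : 1 + (m+1) = m + 2 := by omega
      rw [h1, hf2 (m+2) (by omega) (by simp at hm; omega)]
      have h2 : (m+2).descFactorial (j+2) = (m+2) * ((m+1) * m.descFactorial j) := by
        rw [show m+2 = (m+1)+1 from rfl, Nat.succ_descFactorial_succ,
          Nat.succ_descFactorial_succ]
      rw [h2]
      push_cast
      have hne : ((m:ℝ)+2) * (((m:ℝ)+2) - 1) ≠ 0 := by
        have h : ((m:ℝ)+2) * (((m:ℝ)+2) - 1) = ((m:ℝ)+2) * ((m:ℝ)+1) := by ring
        rw [h]; positivity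
      rw [mul_one_div, div_eq_iff hne]
      ring
    rw [Finset.sum_congr rfl hterm]
    rw [← Nat.cast_sum]
    congr 1
    calc ∑ m ∈ Finset.range (s+1), m.descFactorial j
        = ∑ m ∈ Finset.range (s+1), Nat.factorial j * m.choose j := by
          simp [Nat.descFactorial_eq_factorial_mul_choose]
      _ = Nat.factorial j * ∑ m ∈ Finset.range (s+1), m.choose j := by
          rw [Finset.mul_sum]
      _ = Nat.factorial j * Nat.choose (s+1) (j+1) := by rw [hockey_s12]
  rw [hL]
  have e1 : s + 2 - 1 = s + 1 := rfl
  have e2 : j + 2 - 1 = j + 1 := rfl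
  rw [e1, e2]
  have hpascal : Nat.choose (s+2) (j+2) = Nat.choose (s+1) (j+1) + Nat.choose (s+1) (j+2) :=
    Nat.choose_succ_succ (s+1) (j+1)
  have hmul : (s+2) * Nat.choose (s+1) (j+1) = Nat.choose (s+2) (j+2) * (j+2) :=
    Nat.add_one_mul_choose_eq (s+1) (j+1)
  have hfac : Nat.factorial (j+2) = (j+2) * ((j+1) * Nat.factorial j) := rfl
  have hpascal' : (Nat.choose (s+2) (j+2) : ℝ)
      = (Nat.choose (s+1) (j+1) : ℝ) + (Nat.choose (s+1) (j+2) : ℝ) := by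
    exact_mod_cast congrArg (Nat.cast (R := ℝ)) hpascal
  have hmul' : ((s:ℝ)+2) * (Nat.choose (s+1) (j+1) : ℝ)
      = (Nat.choose (s+2) (j+2) : ℝ) * ((j:ℝ)+2) := by
    exact_mod_cast congrArg (Nat.cast (R := ℝ)) hmul
  have hfac' : (Nat.factorial (j+2) : ℝ) = ((j:ℝ)+2) * (((j:ℝ)+1) * (Nat.factorial j : ℝ)) := by
    exact_mod_cast congrArg (Nat.cast (R := ℝ)) hfac
  have hs2 : ((s:ℝ)+2) ≠ 0 := by positivity
  have hj1 : ((j:ℝ)+1) ≠ 0 := by positivity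
  push_cast
  rw [hfac', hpascal']
  have hkm1 : ((j:ℝ)+2) - 1 = (j:ℝ)+1 := by ring
  rw [hkm1]
  rw [hpascal'] at hmul'
  field_simp
  linear_combination (-((j:ℝ)+1)) * hmul'
end

section
/- Let n and k be natural numbers with 1 ≤ k ≤ n. Then ∑_{σ ∈ Sym(n)} [fix σ]_k = n!, where fix σ denotes the number of fixed points of the permutation σ and [x]_k = x(x-1)⋯(x-(k-1)) is the falling factorial. Equivalently, the k-th factorial moment of the number of fixed points of a uniformly random permutation of an n-element set equals 1. -/
open Finset

/-- The number of fixed points of a permutation of `Fin n`. -/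
def fixCount {n : ℕ} (σ : Equiv.Perm (Fin n)) : ℕ :=
  (Finset.univ.filter fun i => σ i = i).card

/-- Embeddings landing in fixed points of `σ`. -/
def fixEmbEquiv {n k : ℕ} (σ : Equiv.Perm (Fin n)) :
    {f : Fin k ↪ Fin n // ∀ j, σ (f j) = f j} ≃ (Fin k ↪ {i : Fin n // σ i = i}) where
  toFun f := ⟨fun j => ⟨f.1 j, f.2 j⟩, fun a b h => f.1.injective (congrArg Subtype.val h)⟩
  invFun g := ⟨g.trans (Function.Embedding.subtype _), fun j => (g j).2⟩
  left_inv f := by ext j; rfl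
  right_inv g := by ext j; rfl

lemma lemA {n k : ℕ} (σ : Equiv.Perm (Fin n)) :
    (Finset.univ.filter fun f : Fin k ↪ Fin n => ∀ j, σ (f j) = f j).card
      = (fixCount σ).descFactorial k := by
  rw [← Fintype.card_subtype]
  rw [Fintype.card_congr (fixEmbEquiv σ), Fintype.card_embedding_eq]
  simp [fixCount, Fintype.card_subtype]

/-- Permutations fixing the range of an embedding. -/
def fixPermEquiv {n k : ℕ} (f : Fin k ↪ Fin n) :
    {σ : Equiv.Perm (Fin n) // ∀ j, σ (f j) = f j}
      ≃ Equiv.Perm {a : Fin n // a ∉ Set.range f} :=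
  ((Equiv.Perm.subtypeEquivSubtypePerm (fun a : Fin n => a ∉ Set.range f)).trans
    (Equiv.subtypeEquivRight (fun σ => by
      constructor
      · rintro h j
        exact h _ (by simp)
      · rintro h a ha
        rw [not_not] at ha
        obtain ⟨j, rfl⟩ := ha
        exact h j))).symm

lemma lemB {n k : ℕ} (hkn : k ≤ n) (f : Fin k ↪ Fin n) :
    (Finset.univ.filter fun σ : Equiv.Perm (Fin n) => ∀ j, σ (f j) = f j).card
      = Nat.factorial (n - k) := by
  rw [← Fintype.card_subtype, Fintype.card_congr (fixPermEquiv f), Fintype.card_perm]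
  congr 1
  rw [Fintype.card_subtype_compl]
  congr 1
  · simp
  · exact (Fintype.card_congr (Equiv.ofInjective f f.injective).symm).trans (Fintype.card_fin k)

theorem matching_factorial_moment (n k : ℕ) (hk : 1 ≤ k) (hkn : k ≤ n) :
    ∑ σ : Equiv.Perm (Fin n), (fixCount σ).descFactorial k = Nat.factorial n := by
  have h1 : ∑ σ : Equiv.Perm (Fin n), (fixCount σ).descFactorial k
      = ∑ σ : Equiv.Perm (Fin n), ∑ f : Fin k ↪ Fin n,
          (if ∀ j, σ (f j) = f j then 1 else 0) := by
    refine Finset.sum_congr rfl fun σ _ => ?_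
    rw [← lemA σ, Finset.card_filter]
  rw [h1, Finset.sum_comm]
  have h2 : ∀ f : Fin k ↪ Fin n, ∑ σ : Equiv.Perm (Fin n),
      (if ∀ j, σ (f j) = f j then 1 else 0) = Nat.factorial (n - k) := by
    intro f
    rw [← lemB hkn f, Finset.card_filter]
  rw [Finset.sum_congr rfl fun f _ => h2 f, Finset.sum_const, Finset.card_univ,
    Fintype.card_embedding_eq, Fintype.card_fin, Fintype.card_fin, smul_eq_mul,
    Nat.mul_comm, Nat.factorial_mul_descFactorial hkn]
end
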